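/- Let π^ε be a peg basis permutation of B̂_k^{rd}, i.e., π^ε ∉ B̂_k^{rd} and every proper peg pattern of π^ε belongs to B̂_k^{rd}. Then π^ε is compact. -/

import Mathlib

/-! ## Basic definitions: permutations as lists, reversals, distances -/

/-- Decorations for peg permutations: `+`, `-`, `•`. -/
inductive Deco where
  | plus : Deco
  | minus : Deco
  | dot : Deco
deriving DecidableEq, Repr

/-- A peg permutation: a list of entries together with decorations. -/
abbrev PegPerm := List (ℕ × Deco)

def pegDefault : ℕ × Deco := (0, Deco.dot)

/-- The identity permutation `1 2 ⋯ n` as a list. -/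
def idPerm (n : ℕ) : List ℕ := List.range' 1 n

/-- A list of naturals is a permutation (of `1,…,n` where `n` is its length). -/
def IsPermList (π : List ℕ) : Prop := π.Perm (idPerm π.length)

/-- Reverse the segment of a list from (0-indexed) position `i` to `j` inclusive. -/
def segReverse {α : Type*} (l : List α) (i j : ℕ) : List α :=
  l.take i ++ ((l.drop i).take (j + 1 - i)).reverse ++ l.drop (j + 1)

/-- One reversal step on permutations (reverse a segment of length at least 2). -/
def RevStep (l l' : List ℕ) : Prop :=
  ∃ i j, i < j ∧ j < l.length ∧ l' = segReverse l i j

/-- One prefix reversal step on permutations (reverse a prefix of length at least 2). -/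
def PrefRevStep (l l' : List ℕ) : Prop :=
  ∃ j, 0 < j ∧ j < l.length ∧ l' = segReverse l 0 j

/-- Reachability in exactly `k` steps of the step relation `step`. -/
def ReachIn {α : Type*} (step : α → α → Prop) : ℕ → α → α → Prop
  | 0, x, y => x = y
  | k + 1, x, y => ∃ z, step x z ∧ ReachIn step k z y

/-- The reversal distance of a permutation from the identity. -/
noncomputable def rd (π : List ℕ) : ℕ :=
  sInf {k | ReachIn RevStep k π (idPerm π.length)}

/-- The prefix reversal distance of a permutation from the identity. -/
noncomputable def prd (π : List ℕ) : ℕ :=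
  sInf {k | ReachIn PrefRevStep k π (idPerm π.length)}

/-- The ball of radius `k` in the reversal model. -/
def Brd (k : ℕ) : Set (List ℕ) := {π | IsPermList π ∧ rd π ≤ k}

/-- The ball of radius `k` in the prefix reversal model. -/
def Bprd (k : ℕ) : Set (List ℕ) := {π | IsPermList π ∧ prd π ≤ k}

/-! ## Peg permutations: oriented reversals and distances -/

def flipDeco : Deco → Deco
  | Deco.plus => Deco.minus
  | Deco.minus => Deco.plus
  | Deco.dot => Deco.dot

/-- Oriented reversal of the segment from position `i` to `j` (0-indexed) of a peg
permutation: the segment is reversed and the decorations `+`, `-` are swapped. -/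
def pegSegReverse (l : PegPerm) (i j : ℕ) : PegPerm :=
  l.take i ++ (((l.drop i).take (j + 1 - i)).map (fun p => (p.1, flipDeco p.2))).reverse
    ++ l.drop (j + 1)

/-- One oriented reversal step on peg permutations. -/
def PegRevStep (l l' : PegPerm) : Prop :=
  ∃ i j, i ≤ j ∧ j < l.length ∧ l' = pegSegReverse l i j

/-- One oriented prefix reversal step on peg permutations. -/
def PegPrefRevStep (l l' : PegPerm) : Prop :=
  ∃ j, j < l.length ∧ l' = pegSegReverse l 0 j

/-- The underlying list of a peg permutation is a permutation. -/
def IsPegPermList (l : PegPerm) : Prop := IsPermList (l.map Prod.fst)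

/-- An identity peg permutation: underlying identity, every decoration `+` or `•`. -/
def IsIdPeg (l : PegPerm) : Prop :=
  l.map Prod.fst = idPerm l.length ∧ ∀ p ∈ l, p.2 ≠ Deco.minus

/-- The reversal distance of a peg permutation from an identity peg permutation. -/
noncomputable def pegRd (l : PegPerm) : ℕ :=
  sInf {k | ∃ m, IsIdPeg m ∧ ReachIn PegRevStep k l m}

/-- The prefix reversal distance of a peg permutation from an identity peg permutation. -/
noncomputable def pegPrd (l : PegPerm) : ℕ :=
  sInf {k | ∃ m, IsIdPeg m ∧ ReachIn PegPrefRevStep k l m}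

/-- The ball of radius `k` of peg permutations in the reversal model. -/
def PegBrd (k : ℕ) : Set PegPerm := {l | IsPegPermList l ∧ pegRd l ≤ k}

/-- The ball of radius `k` of peg permutations in the prefix reversal model. -/
def PegBprd (k : ℕ) : Set PegPerm := {l | IsPegPermList l ∧ pegPrd l ≤ k}

/-! ## Patterns -/

/-- Two lists of the same length are order-isomorphic. -/
def OrderIsoList (s t : List ℕ) : Prop :=
  s.length = t.length ∧
  ∀ i j, i < s.length → j < s.length → (s.getD i 0 < s.getD j 0 ↔ t.getD i 0 < t.getD j 0)

/-- `σ` is a (classical) pattern of `τ`. -/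
def IsPattern (σ τ : List ℕ) : Prop :=
  ∃ s, s.Sublist τ ∧ OrderIsoList s σ

/-- `σ` is a peg pattern of `τ`: some subsequence of `τ` is order-isomorphic to `σ`
and whenever an entry of the subsequence is decorated `+` (resp. `-`), the
corresponding entry of `σ` is decorated `+` (resp. `-`). -/
def IsPegPattern (σ τ : PegPerm) : Prop :=
  ∃ s : PegPerm, s.Sublist τ ∧ OrderIsoList (s.map Prod.fst) (σ.map Prod.fst) ∧
    ∀ i, i < s.length →
      ((s.getD i pegDefault).2 = Deco.plus → (σ.getD i pegDefault).2 = Deco.plus) ∧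
      ((s.getD i pegDefault).2 = Deco.minus → (σ.getD i pegDefault).2 = Deco.minus)

/-! ## Strips, clean compact and compact peg permutations -/

/-- Two adjacent entries of a peg permutation lie in a common strip. -/
def StripPair (p q : ℕ × Deco) : Prop :=
  (q.1 = p.1 + 1 ∧ p.2 ≠ Deco.minus ∧ q.2 ≠ Deco.minus) ∨
  (p.1 = q.1 + 1 ∧ p.2 ≠ Deco.plus ∧ q.2 ≠ Deco.plus)

/-- A peg permutation is clean compact when all its strips have length 1, i.e. no two
adjacent entries lie in a common strip. -/
def CleanCompact (l : PegPerm) : Prop :=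
  ∀ i, i + 1 < l.length → ¬ StripPair (l.getD i pegDefault) (l.getD (i + 1) pegDefault)

/-- A peg permutation is compact when every strip has length 1 or consists
exclusively of entries decorated `•`. -/
def CompactPeg (l : PegPerm) : Prop :=
  ∀ i, i + 1 < l.length → StripPair (l.getD i pegDefault) (l.getD (i + 1) pegDefault) →
    (l.getD i pegDefault).2 = Deco.dot ∧ (l.getD (i + 1) pegDefault).2 = Deco.dot

/-! ## The clean compact peg permutation `peg(γ)` associated with a permutation -/

/-- The decomposition of a permutation into maximal monotone strips of adjacent values. -/
def stripGroups (γ : List ℕ) : List (List ℕ) :=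
  γ.splitBy (fun a b => b == a + 1 || a == b + 1)

def stripMin (s : List ℕ) : ℕ := s.foldr min (s.headD 0)

def stripDeco (s : List ℕ) : Deco :=
  if s.length ≤ 1 then Deco.dot
  else if s.headD 0 < s.getLastD 0 then Deco.plus
  else Deco.minus

/-- Rank of `v` among `vals` (used for rescaling). -/
def rankIn (vals : List ℕ) (v : ℕ) : ℕ := (vals.filter (fun w => w ≤ v)).length

/-- The clean compact peg permutation associated with a permutation: replace each
strip by its minimum, decorated `+`/`-`/`•` according to the kind of strip, and rescale. -/
def pegOf (γ : List ℕ) : PegPerm :=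
  (stripGroups γ).map (fun s => (rankIn ((stripGroups γ).map stripMin) (stripMin s), stripDeco s))

/-! ## Monotone inflations and grid classes -/

/-- A legal inflation vector for a peg permutation. -/
def LegalVec (πε : PegPerm) (v : List ℕ) : Prop :=
  v.length = πε.length ∧
  ∀ i, i < πε.length → (πε.getD i pegDefault).2 = Deco.dot → v.getD i 0 ≤ 1

/-- The values of the `i`-th block of the monotone inflation of `πε` through `v`:
an increasing (resp. decreasing) run of `vᵢ` values, occupying the interval of values
determined by the relative order of the entries of `πε`. -/
def blockVals (πε : PegPerm) (v : List ℕ) (i : ℕ) : List ℕ :=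
  let off := (((List.range πε.length).filter
      (fun j => (πε.getD j pegDefault).1 < (πε.getD i pegDefault).1)).map
      (fun j => v.getD j 0)).sum
  if (πε.getD i pegDefault).2 = Deco.minus then (List.range' (off + 1) (v.getD i 0)).reverse
  else List.range' (off + 1) (v.getD i 0)

/-- The monotone inflation `πε[v]`. -/
def inflate (πε : PegPerm) (v : List ℕ) : List ℕ :=
  ((List.range πε.length).map (blockVals πε v)).flatten

/-- The grid class of a peg permutation: all its monotone inflations through legal
inflation vectors. -/
def GridOf (πε : PegPerm) : Set (List ℕ) :=
  {γ | ∃ v, LegalVec πε v ∧ γ = inflate πε v}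

/-- Compatibility of decorations in peg monotone inflations: a `+` entry is inflated by
an identity peg permutation (decorations `+`/`•`), a `-` entry by a reverse identity peg
permutation (decorations `-`/`•`), a `•` entry stays `•`. -/
def DecoOK : Deco → Deco → Prop
  | Deco.plus, d => d ≠ Deco.minus
  | Deco.minus, d => d ≠ Deco.plus
  | Deco.dot, d => d = Deco.dot

/-- The peg grid class of a peg permutation: all its peg monotone inflations. -/
def GridPegOf (πε : PegPerm) : Set PegPerm :=
  {γ | ∃ v, LegalVec πε v ∧ ∃ bs : List PegPerm,
    bs.length = πε.length ∧ γ = bs.flatten ∧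
    ∀ i, i < πε.length →
      (bs.getD i []).map Prod.fst = blockVals πε v i ∧
      ∀ p ∈ bs.getD i [], DecoOK (πε.getD i pegDefault).2 p.2}

/-! ## The inflation `π^ε_I` and the permutation `π̃^ε_I` -/

/-- Canonical peg inflation: every inflated entry keeps the decoration of the
original one. -/
def pegInflate (πε : PegPerm) (v : List ℕ) : PegPerm :=
  ((List.range πε.length).map
    (fun i => (blockVals πε v i).map (fun x => (x, (πε.getD i pegDefault).2)))).flatten

/-- The inflation vector associated with the multiset `I = {i, j}` (0-indexed):
entries `i` and `j` are inflated by one more element each. -/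
def inflVec (n i j : ℕ) : List ℕ :=
  (List.range n).map (fun l => 1 + (if l = i then 1 else 0) + (if l = j then 1 else 0))

/-- `π^ε_I` where `I = {i, j}` with `i ≤ j` 0-indexed. -/
def pegI (πε : PegPerm) (i j : ℕ) : PegPerm := pegInflate πε (inflVec πε.length i j)

/-- `π̃^ε_I`: the result of applying to `π^ε_I` the oriented reversal of the segment
of (0-indexed) positions `i+1, …, j+1`. -/
def pegITilde (πε : PegPerm) (i j : ℕ) : PegPerm := pegSegReverse (pegI πε i j) (i + 1) (j + 1)

/-! ## Clean compact peg bases -/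

/-- The clean compact peg basis of a set `B` of peg permutations: the clean compact
peg permutations not in `B` all of whose proper clean compact peg patterns are in `B`. -/
def CCPegBasis (B : Set PegPerm) : Set PegPerm :=
  {πε | IsPegPermList πε ∧ CleanCompact πε ∧ πε ∉ B ∧
    ∀ γ, IsPegPermList γ → CleanCompact γ → IsPegPattern γ πε → γ ≠ πε → γ ∈ B}

/-! ## The exceptional peg permutations for the prefix reversal model -/

/-- `Θ_e(n)` for even `n`:  `n• (n−2)• ⋯ 4• 2• 1⁺ 3• ⋯ (n−3)• (n−1)•`. -/
def ThetaE (n : ℕ) : PegPerm :=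
  ((List.range (n / 2)).map (fun i => (n - 2 * i, Deco.dot))) ++ [(1, Deco.plus)] ++
  ((List.range (n / 2 - 1)).map (fun i => (3 + 2 * i, Deco.dot)))

/-- `Θ_o(n)` for odd `n`:  `n• (n−2)• ⋯ 3• 1⁻ 2• 4• ⋯ (n−3)• (n−1)•`. -/
def ThetaO (n : ℕ) : PegPerm :=
  ((List.range ((n - 1) / 2)).map (fun i => (n - 2 * i, Deco.dot))) ++ [(1, Deco.minus)] ++
  ((List.range ((n - 1) / 2)).map (fun i => (2 + 2 * i, Deco.dot)))

/-- `Λ_e(n)` for even `n` and `t = n/2`:  `(t+1)⁺ t• (t+2)• (t−1)• ⋯ (n−1)• 2• n• 1•`. -/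
def LambdaE (n : ℕ) : PegPerm :=
  (List.range (n / 2)).flatMap
    (fun i => [(n / 2 + 1 + i, if i = 0 then Deco.plus else Deco.dot), (n / 2 - i, Deco.dot)])

/-- `Λ_o(n)` for odd `n` and `t = (n+1)/2`:  `t⁻ (t+1)• (t−1)• (t+2)• ⋯ (n−1)• 2• n• 1•`. -/
def LambdaO (n : ℕ) : PegPerm :=
  ((n + 1) / 2, Deco.minus) ::
    (List.range ((n + 1) / 2 - 1)).flatMap
      (fun i => [((n + 1) / 2 + 1 + i, Deco.dot), ((n + 1) / 2 - 1 - i, Deco.dot)])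

/-!
If two adjacent entries of `π^ε` lie in a common strip, they are the expansion of a single entry
of value `a` decorated `+` (increasing strip) or `-` (decreasing strip). Merging them gives a
proper peg pattern `γ` of `π^ε`, since the pattern condition only constrains the decoration of
the entry of the strip that is kept. An oriented reversal of `γ` moves the merged entry as a
block and swaps `+`/`-`, which is exactly what it does to the two-entry strip; so expanding the
entry turns any sorting sequence of `γ` into one of `π^ε`, and `rd π^ε ≤ rd γ ≤ k`. Hence a basis
element has no strip of length two at all, and in particular it is compact.
-/

@[simp] lemma flipDeco_flipDeco (d : Deco) : flipDeco (flipDeco d) = d := by cases d <;> rfl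

@[simp] lemma flipDeco_eq_dot_iff {d : Deco} : flipDeco d = Deco.dot ↔ d = Deco.dot := by
  cases d <;> simp [flipDeco]

@[simp] lemma flipDeco_eq_plus_iff {d : Deco} : flipDeco d = Deco.plus ↔ d = Deco.minus := by
  cases d <;> simp [flipDeco]

@[simp] lemma flipDeco_eq_minus_iff {d : Deco} : flipDeco d = Deco.minus ↔ d = Deco.plus := by
  cases d <;> simp [flipDeco]

def flipEntry (p : ℕ × Deco) : ℕ × Deco := (p.1, flipDeco p.2)

@[simp] lemma flipEntry_fst (p : ℕ × Deco) : (flipEntry p).1 = p.1 := rfl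

@[simp] lemma flipEntry_snd (p : ℕ × Deco) : (flipEntry p).2 = flipDeco p.2 := rfl

@[simp] lemma flipEntry_flipEntry (p : ℕ × Deco) : flipEntry (flipEntry p) = p := by
  simp [flipEntry]

lemma pegRevStep_iff {l l' : PegPerm} :
    PegRevStep l l' ↔ ∃ A M B : PegPerm, M ≠ [] ∧ l = A ++ M ++ B ∧
      l' = A ++ (M.map flipEntry).reverse ++ B := by
  constructor
  · rintro ⟨i, j, hij, hj, rfl⟩
    refine ⟨l.take i, (l.drop i).take (j + 1 - i), l.drop (j + 1), ?_, ?_, rfl⟩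
    · simp only [ne_eq, List.take_eq_nil_iff, List.drop_eq_nil_iff, not_or]
      omega
    · have hdrop : ((l.drop i).drop (j + 1 - i)) = l.drop (j + 1) := by
        rw [List.drop_drop]; congr 1; omega
      rw [List.append_assoc, ← hdrop, List.take_append_drop, List.take_append_drop]
  · rintro ⟨A, M, B, hM, rfl, rfl⟩
    have hMlen : 0 < M.length := List.length_pos_iff.mpr hM
    refine ⟨A.length, A.length + M.length - 1, by omega, by simp; omega, ?_⟩
    simp [pegSegReverse, Nat.sub_add_cancel (by omega : 1 ≤ A.length + M.length),
      List.drop_append, List.drop_eq_nil_of_le (by omega : A.length ≤ A.length + M.length),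
      flipEntry]

lemma PegRevStep.length_eq {l l' : PegPerm} (h : PegRevStep l l') : l'.length = l.length := by
  obtain ⟨A, M, B, -, rfl, rfl⟩ := pegRevStep_iff.mp h
  simp

lemma PegRevStep.cons (p : ℕ × Deco) {l l' : PegPerm} (h : PegRevStep l l') :
    PegRevStep (p :: l) (p :: l') := by
  obtain ⟨A, M, B, hM, rfl, rfl⟩ := pegRevStep_iff.mp h
  exact pegRevStep_iff.mpr ⟨p :: A, M, B, hM, rfl, rfl⟩

lemma pegRevStep_singleton (p : ℕ × Deco) (l : PegPerm) :
    PegRevStep (p :: l) (flipEntry p :: l) :=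
  pegRevStep_iff.mpr ⟨[], [p], l, by simp, rfl, rfl⟩

section ReachIn

variable {α β : Type*} {r : α → α → Prop} {s : β → β → Prop}

lemma ReachIn.preserves {P : α → Prop} (hP : ∀ x y, P x → r x y → P y) :
    ∀ {k : ℕ} {x y : α}, P x → ReachIn r k x y → P y
  | 0, _, _, hx, rfl => hx
  | _ + 1, _, _, hx, ⟨_, hz, hr⟩ => ReachIn.preserves hP (hP _ _ hx hz) hr

lemma ReachIn.lift {P : α → Prop} (f : α → β) (hP : ∀ x y, P x → r x y → P y)
    (hf : ∀ x y, P x → r x y → s (f x) (f y)) :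
    ∀ {k : ℕ} {x y : α}, P x → ReachIn r k x y → ReachIn s k (f x) (f y)
  | 0, _, _, _, rfl => rfl
  | _ + 1, _, _, hx, ⟨z, hz, hr⟩ =>
    ⟨f z, hf _ _ hx hz, ReachIn.lift f hP hf (hP _ _ hx hz) hr⟩

end ReachIn

lemma ReachIn.pegRevStep_cons (p : ℕ × Deco) {k : ℕ} {l m : PegPerm}
    (h : ReachIn PegRevStep k l m) : ReachIn PegRevStep k (p :: l) (p :: m) :=
  ReachIn.lift (P := fun _ => True) (List.cons p) (fun _ _ _ _ => trivial)
    (fun _ _ _ => PegRevStep.cons p) trivial h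

lemma ReachIn.pegRevStep_length_eq {k : ℕ} {l m : PegPerm} (h : ReachIn PegRevStep k l m) :
    m.length = l.length :=
  ReachIn.preserves (P := fun l' => l'.length = l.length)
    (fun _ _ hx hxy => (PegRevStep.length_eq hxy).trans hx) rfl h

/-- Selection sort by oriented reversals, also turning every decoration into `+` or `•`. -/
lemma exists_reachIn_of_perm (target : List ℕ) :
    ∀ l : PegPerm, (l.map Prod.fst).Perm target →
      ∃ k m, ReachIn PegRevStep k l m ∧ m.map Prod.fst = target ∧
        ∀ p ∈ m, p.2 ≠ Deco.minus := by
  induction target with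
  | nil =>
    intro l h
    obtain rfl : l = [] := List.map_eq_nil_iff.mp (List.perm_nil.mp h)
    exact ⟨0, [], rfl, rfl, by simp⟩
  | cons t ts ih =>
    intro l h
    obtain ⟨p, hp, rfl⟩ := List.mem_map.mp (h.mem_iff.mpr List.mem_cons_self)
    obtain ⟨A, B, rfl⟩ := List.append_of_mem hp
    set rest := (A.map flipEntry).reverse ++ B
    have hfront : PegRevStep (A ++ p :: B) (flipEntry p :: rest) :=
      pegRevStep_iff.mpr ⟨[], A ++ [p], B, by simp, by simp, by simp [rest]⟩
    have hrest : (rest.map Prod.fst).Perm ts := by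
      refine List.Perm.cons_inv (a := p.1) (List.Perm.trans ?_ h)
      simpa [rest, Function.comp_def] using
        ((List.reverse_perm _).append_right _).cons p.1 |>.trans List.perm_middle.symm
    obtain ⟨k, m, hr, hm, hd⟩ := ih rest hrest
    by_cases hpd : p.2 = Deco.plus
    · refine ⟨k + 2, p :: m, ⟨_, hfront, _, ?_, hr.pegRevStep_cons p⟩, by simp [hm], ?_⟩
      · simpa using pegRevStep_singleton (flipEntry p) rest
      · simpa [hpd] using hd
    · exact ⟨k + 1, flipEntry p :: m, ⟨_, hfront, hr.pegRevStep_cons _⟩, by simp [hm],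
        by simpa [hpd] using hd⟩

lemma exists_reachIn_pegRd {l : PegPerm} (h : IsPegPermList l) :
    ∃ m, IsIdPeg m ∧ ReachIn PegRevStep (pegRd l) l m := by
  obtain ⟨k, m, hr, hm, hd⟩ := exists_reachIn_of_perm _ l h
  have hlen : m.length = l.length := hr.pegRevStep_length_eq
  exact Nat.sInf_mem (s := {k | ∃ m, IsIdPeg m ∧ ReachIn PegRevStep k l m})
    ⟨k, m, ⟨by simpa [hlen] using hm, hd⟩, hr⟩

lemma pegRd_le_of_reachIn {l m : PegPerm} {k : ℕ} (hm : IsIdPeg m)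
    (h : ReachIn PegRevStep k l m) : pegRd l ≤ k :=
  Nat.sInf_le ⟨m, hm, h⟩

/-- Inflates an entry of value `a` into the strip `a^x (a+1)^y`, or into its oriented reversal
when the entry is decorated `-`, and shifts larger values up by one. -/
def expandEntry (a : ℕ) (x y : Deco) (p : ℕ × Deco) : PegPerm :=
  if p.1 < a then [p]
  else if p.1 = a then
    (if p.2 = Deco.minus then [(a + 1, flipDeco y), (a, flipDeco x)] else [(a, x), (a + 1, y)])
  else [(p.1 + 1, p.2)]

def expandValue (a v : ℕ) : List ℕ :=
  if v < a then [v] else if v = a then [a, a + 1] else [v + 1]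

def NoDotAt (a : ℕ) (l : PegPerm) : Prop := ∀ p ∈ l, p.1 = a → p.2 ≠ Deco.dot

section Expand

variable {a : ℕ} {x y : Deco}

lemma expandEntry_ne_nil (p : ℕ × Deco) : expandEntry a x y p ≠ [] := by
  unfold expandEntry; split_ifs <;> simp

/-- A `+` and a `-` entry of value `a` expand to mutually reversed strips; a `•` entry would
not. -/
lemma expandEntry_flipEntry {p : ℕ × Deco} (hp : p.1 = a → p.2 ≠ Deco.dot) :
    expandEntry a x y (flipEntry p) = ((expandEntry a x y p).map flipEntry).reverse := by
  obtain ⟨v, d⟩ := p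
  rcases lt_trichotomy v a with h | rfl | h
  · simp [expandEntry, h]
  · cases d
    · simp [expandEntry, flipEntry, flipDeco]
    · simp [expandEntry, flipEntry, show flipDeco Deco.minus = Deco.plus from rfl]
    · exact absurd rfl (hp rfl)
  · simp [expandEntry, flipEntry, h.not_gt, h.ne']

lemma flatMap_expandEntry_reverse_map_flipEntry {M : PegPerm} (hM : NoDotAt a M) :
    ((M.map flipEntry).reverse).flatMap (expandEntry a x y) =
      ((M.flatMap (expandEntry a x y)).map flipEntry).reverse := by
  induction M with
  | nil => rfl
  | cons p M ih =>
    simp [ih fun q hq => hM q (List.mem_cons_of_mem _ hq),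
      expandEntry_flipEntry (hM p List.mem_cons_self)]

lemma PegRevStep.flatMap_expandEntry {l l' : PegPerm} (hl : NoDotAt a l)
    (h : PegRevStep l l') :
    PegRevStep (l.flatMap (expandEntry a x y)) (l'.flatMap (expandEntry a x y)) := by
  obtain ⟨A, M, B, hM, rfl, rfl⟩ := pegRevStep_iff.mp h
  refine pegRevStep_iff.mpr ⟨A.flatMap (expandEntry a x y), M.flatMap (expandEntry a x y),
    B.flatMap (expandEntry a x y), ?_, by simp, ?_⟩
  · obtain ⟨p, M, rfl⟩ := List.exists_cons_of_ne_nil hM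
    simp [expandEntry_ne_nil]
  · rw [List.flatMap_append, List.flatMap_append, flatMap_expandEntry_reverse_map_flipEntry
      fun p hp => hl p (by simp [hp])]

lemma NoDotAt.of_pegRevStep {l l' : PegPerm} (hl : NoDotAt a l) (h : PegRevStep l l') :
    NoDotAt a l' := by
  obtain ⟨A, M, B, -, rfl, rfl⟩ := pegRevStep_iff.mp h
  intro p hp
  simp only [List.mem_append, List.mem_reverse, List.mem_map] at hp
  rcases hp with (hp | ⟨q, hq, rfl⟩) | hp
  · exact hl p (by simp [hp])
  · simpa using hl q (by simp [hq])
  · exact hl p (by simp [hp])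

lemma ReachIn.flatMap_expandEntry {k : ℕ} {l m : PegPerm} (hl : NoDotAt a l)
    (h : ReachIn PegRevStep k l m) :
    ReachIn PegRevStep k (l.flatMap (expandEntry a x y)) (m.flatMap (expandEntry a x y)) :=
  ReachIn.lift (P := NoDotAt a) _ (fun _ _ => NoDotAt.of_pegRevStep)
    (fun _ _ => PegRevStep.flatMap_expandEntry) hl h

lemma map_fst_expandEntry {p : ℕ × Deco} (hp : p.2 ≠ Deco.minus) :
    (expandEntry a x y p).map Prod.fst = expandValue a p.1 := by
  unfold expandEntry expandValue; split_ifs <;> simp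

lemma flatMap_expandValue_range'_of_lt {s : ℕ} (n : ℕ) (hs : a < s) :
    (List.range' s n).flatMap (expandValue a) = List.range' (s + 1) n := by
  induction n generalizing s with
  | zero => rfl
  | succ n ih =>
    rw [List.range'_succ, List.flatMap_cons, ih (by omega), List.range'_succ]
    simp [expandValue, hs.not_gt, hs.ne']

lemma flatMap_expandValue_range' {s n : ℕ} (hs : s ≤ a) (hn : a < s + n) :
    (List.range' s n).flatMap (expandValue a) = List.range' s (n + 1) := by
  induction n generalizing s with
  | zero => omega
  | succ n ih =>
    rw [List.range'_succ, List.flatMap_cons]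
    rcases hs.lt_or_eq with hs | rfl
    · rw [ih (by omega) (by omega), List.range'_succ (n := n + 1)]
      simp [expandValue, hs]
    · rw [flatMap_expandValue_range'_of_lt n (by omega)]
      simp [expandValue, List.range'_succ]

lemma snd_ne_minus_of_mem_expandEntry {p q : ℕ × Deco} (hp : p.2 ≠ Deco.minus)
    (hx : x ≠ Deco.minus) (hy : y ≠ Deco.minus) (hq : q ∈ expandEntry a x y p) :
    q.2 ≠ Deco.minus := by
  unfold expandEntry at hq
  split_ifs at hq <;> simp only [List.mem_cons, List.not_mem_nil, or_false] at hq <;>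
    first | rcases hq with rfl | rfl | rfl <;> simp_all

lemma IsIdPeg.flatMap_expandEntry {m : PegPerm} (hm : IsIdPeg m) (hx : x ≠ Deco.minus)
    (hy : y ≠ Deco.minus) (ha : 1 ≤ a) (ham : a ≤ m.length) :
    IsIdPeg (m.flatMap (expandEntry a x y)) := by
  obtain ⟨hfst, hdec⟩ := hm
  have hvals :
      (m.flatMap (expandEntry a x y)).map Prod.fst = List.range' 1 (m.length + 1) := by
    rw [List.map_flatMap, List.flatMap_congr fun p hp => map_fst_expandEntry (hdec p hp),
      ← List.flatMap_map, hfst, idPerm, flatMap_expandValue_range' ha (by omega)]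
  have hlen : (m.flatMap (expandEntry a x y)).length = m.length + 1 := by
    simpa using congrArg List.length hvals
  refine ⟨by rw [hvals, hlen, idPerm], fun p hp => ?_⟩
  obtain ⟨q, hq, hpq⟩ := List.mem_flatMap.mp hp
  exact snd_ne_minus_of_mem_expandEntry (hdec q hq) hx hy hpq

lemma pegRd_flatMap_expandEntry_le {l : PegPerm} (hl : IsPegPermList l) (hdot : NoDotAt a l)
    (hx : x ≠ Deco.minus) (hy : y ≠ Deco.minus) (ha : 1 ≤ a) (hal : a ≤ l.length) :
    pegRd (l.flatMap (expandEntry a x y)) ≤ pegRd l := by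
  obtain ⟨m, hm, hr⟩ := exists_reachIn_pegRd hl
  exact pegRd_le_of_reachIn (hm.flatMap_expandEntry hx hy ha (hr.pegRevStep_length_eq ▸ hal))
    (hr.flatMap_expandEntry hdot)

end Expand

lemma isPermList_iff {π : List ℕ} :
    IsPermList π ↔ π.Nodup ∧ ∀ v ∈ π, 1 ≤ v ∧ v ≤ π.length := by
  unfold IsPermList idPerm
  constructor
  · intro h
    refine ⟨h.nodup_iff.mpr List.nodup_range', fun v hv => ?_⟩
    have := List.mem_range'_1.mp (h.mem_iff.mp hv)
    omega
  · rintro ⟨hnd, hmem⟩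
    refine (hnd.subperm fun v hv => ?_).perm_of_length_le (by simp)
    have := hmem v hv
    exact List.mem_range'_1.mpr (by omega)

/-- The decoration condition of a peg pattern, for an entry decorated `d` in the larger peg
permutation and the corresponding entry decorated `e` in the pattern. -/
def DecoRefines (d e : Deco) : Prop :=
  (d = Deco.plus → e = Deco.plus) ∧ (d = Deco.minus → e = Deco.minus)

lemma DecoRefines.refl (d : Deco) : DecoRefines d d := ⟨id, id⟩

lemma isPegPattern_map {s τ : PegPerm} (hs : s.Sublist τ) (g : ℕ × Deco → ℕ × Deco)
    (hord : ∀ p ∈ s, ∀ q ∈ s, ((g p).1 < (g q).1 ↔ p.1 < q.1))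
    (hdeco : ∀ p ∈ s, DecoRefines p.2 (g p).2) : IsPegPattern (s.map g) τ := by
  refine ⟨s, hs, ⟨by simp, fun i j hi hj => ?_⟩, fun i hi => ?_⟩
  · simp only [List.length_map] at hi hj
    simp only [List.getD_eq_getElem?_getD, List.getElem?_map, List.getElem?_eq_getElem hi,
      List.getElem?_eq_getElem hj, Option.map_some, Option.getD_some]
    exact (hord _ (List.getElem_mem hi) _ (List.getElem_mem hj)).symm
  · simp only [List.getD_eq_getElem?_getD, List.getElem?_map, List.getElem?_eq_getElem hi,
      Option.map_some, Option.getD_some]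
    exact hdeco _ (List.getElem_mem hi)

def collapseValue (a v : ℕ) : ℕ := if v ≤ a then v else v - 1

def mergeEntry (a : ℕ) (e : Deco) (p : ℕ × Deco) : ℕ × Deco :=
  (collapseValue a p.1, if p.1 = a then e else p.2)

section Merge

variable {a : ℕ} {x y e : Deco}

lemma expandEntry_mergeEntry {p : ℕ × Deco} (h : p.1 ≠ a) (h' : p.1 ≠ a + 1) :
    expandEntry a x y (mergeEntry a e p) = [p] := by
  obtain ⟨v, d⟩ := p
  unfold expandEntry mergeEntry collapseValue
  split_ifs <;> simp_all <;> omega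

lemma expandEntry_self : expandEntry a x y (a, e) =
    if e = Deco.minus then [(a + 1, flipDeco y), (a, flipDeco x)] else [(a, x), (a + 1, y)] := by
  simp [expandEntry]

lemma exists_mem_expandEntry_self (he : e ≠ Deco.dot) (hx : x ≠ Deco.minus) :
    ∃ d, (a, d) ∈ expandEntry a x y (a, e) ∧ DecoRefines d e := by
  cases e
  · exact ⟨x, by simp [expandEntry], fun _ => rfl, fun h => absurd h hx⟩
  · exact ⟨flipDeco x, by simp [expandEntry], fun h => absurd (flipDeco_eq_plus_iff.mp h) hx,
      fun _ => rfl⟩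
  · exact absurd rfl he

lemma mem_map_fst_expandEntry_self {v : ℕ} :
    v ∈ (expandEntry a x y (a, e)).map Prod.fst ↔ v = a ∨ v = a + 1 := by
  rw [expandEntry_self]
  split_ifs <;> simp [or_comm]

lemma StripPair.exists_expandEntry_eq {p q : ℕ × Deco} (h : StripPair p q) :
    ∃ a x y e, e ≠ Deco.dot ∧ x ≠ Deco.minus ∧ y ≠ Deco.minus ∧
      expandEntry a x y (a, e) = [p, q] := by
  obtain ⟨u, d⟩ := p
  obtain ⟨w, d'⟩ := q
  rcases h with ⟨rfl, hd, hd'⟩ | ⟨rfl, hd, hd'⟩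
  · exact ⟨u, d, d', Deco.plus, by simp, hd, hd', by simp [expandEntry]⟩
  · exact ⟨w, flipDeco d', flipDeco d, Deco.minus, by simp, by simpa using hd',
      by simpa using hd, by simp [expandEntry]⟩

lemma collapseValue_lt_collapseValue_iff {v w : ℕ} (hw : w ≠ a + 1) :
    collapseValue a v < collapseValue a w ↔ v < w := by
  unfold collapseValue; split_ifs <;> omega

lemma isPegPermList_map_mergeEntry {s τ : PegPerm} (hτ : IsPegPermList τ) (hs : s.Sublist τ)
    (hlen : s.length + 1 = τ.length) (hsa : ∀ q ∈ s, q.1 ≠ a + 1) (ha : a + 1 ≤ τ.length) :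
    IsPegPermList (s.map (mergeEntry a e)) := by
  obtain ⟨hnd, hmem⟩ := isPermList_iff.mp hτ
  have hvals : (s.map (mergeEntry a e)).map Prod.fst = (s.map Prod.fst).map (collapseValue a) := by
    simp [Function.comp_def, mergeEntry]
  refine isPermList_iff.mpr ⟨hvals ▸ ?_, fun v hv => ?_⟩
  · refine List.Nodup.map_on (fun v hv w hw hvw => ?_) ((hs.map Prod.fst).nodup hnd)
    obtain ⟨p, hp, rfl⟩ := List.mem_map.mp hv
    obtain ⟨q, hq, rfl⟩ := List.mem_map.mp hw
    have := collapseValue_lt_collapseValue_iff (v := p.1) (hsa q hq)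
    have := collapseValue_lt_collapseValue_iff (v := q.1) (hsa p hp)
    omega
  · rw [hvals, List.map_map, List.mem_map] at hv
    obtain ⟨p, hp, rfl⟩ := hv
    have hbound := hmem p.1 (List.mem_map_of_mem (hs.subset hp))
    have hpa := hsa p hp
    simp only [List.length_map, Function.comp_apply, collapseValue] at hbound ⊢
    split_ifs <;> omega

lemma isPegPattern_map_mergeEntry {s τ : PegPerm} (hs : s.Sublist τ) (hsa : ∀ q ∈ s, q.1 ≠ a + 1)
    (hde : ∀ q ∈ s, q.1 = a → DecoRefines q.2 e) : IsPegPattern (s.map (mergeEntry a e)) τ := by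
  refine isPegPattern_map hs _ (fun p _ q hq => collapseValue_lt_collapseValue_iff (hsa q hq))
    fun q hq => ?_
  by_cases hqa : q.1 = a
  · simpa [mergeEntry, hqa] using hde q hq hqa
  · simpa [mergeEntry, hqa] using DecoRefines.refl q.2

lemma noDotAt_map_mergeEntry {s : PegPerm} (hsa : ∀ q ∈ s, q.1 ≠ a + 1) (he : e ≠ Deco.dot) :
    NoDotAt a (s.map (mergeEntry a e)) := by
  simp only [NoDotAt, List.mem_map]
  rintro _ ⟨q, hq, rfl⟩ hqa
  have := hsa q hq
  simp only [mergeEntry, collapseValue] at hqa ⊢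
  rw [if_pos (by split_ifs at hqa <;> omega)]
  exact he

lemma flatMap_expandEntry_map_mergeEntry {A B : PegPerm} {d : Deco}
    (hAB : ∀ q ∈ A ++ B, q.1 ≠ a ∧ q.1 ≠ a + 1) :
    ((A ++ (a, d) :: B).map (mergeEntry a e)).flatMap (expandEntry a x y) =
      A ++ expandEntry a x y (a, e) ++ B := by
  have hid : ∀ C : PegPerm, (∀ q ∈ C, q.1 ≠ a ∧ q.1 ≠ a + 1) →
      (C.map (mergeEntry a e)).flatMap (expandEntry a x y) = C := fun C hC => by
    rw [List.flatMap_map, List.flatMap_congr fun q hq => expandEntry_mergeEntry (hC q hq).1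
      (hC q hq).2, List.flatMap_singleton']
  rw [List.map_append, List.flatMap_append, hid A fun q hq => hAB q (by simp [hq]),
    List.map_cons, List.flatMap_cons, hid B fun q hq => hAB q (by simp [hq])]
  simp [mergeEntry, collapseValue]

variable {πε A B : PegPerm}

lemma fst_ne_of_isPegPermList (h0 : IsPegPermList (A ++ expandEntry a x y (a, e) ++ B)) :
    ∀ q ∈ A ++ B, q.1 ≠ a ∧ q.1 ≠ a + 1 := by
  set S := expandEntry a x y (a, e)
  have hperm : ((A ++ S ++ B).map Prod.fst).Perm (S.map Prod.fst ++ (A ++ B).map Prod.fst) := by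
    simpa using (List.perm_append_comm (l₁ := A.map Prod.fst) (l₂ := S.map Prod.fst)).append_right
      (B.map Prod.fst)
  have hdisj := (List.nodup_append.mp (hperm.nodup_iff.mp (isPermList_iff.mp h0).1)).2.2
  intro q hq
  exact ⟨(hdisj a (mem_map_fst_expandEntry_self.mpr (.inl rfl)) _ (List.mem_map_of_mem hq)).symm,
    (hdisj _ (mem_map_fst_expandEntry_self.mpr (.inr rfl)) _ (List.mem_map_of_mem hq)).symm⟩

lemma one_le_and_lt_length_of_isPegPermList
    (h0 : IsPegPermList (A ++ expandEntry a x y (a, e) ++ B)) :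
    1 ≤ a ∧ a < (A ++ expandEntry a x y (a, e) ++ B).length := by
  have hmem := (isPermList_iff.mp h0).2
  have ha := hmem a (by simp [mem_map_fst_expandEntry_self])
  have ha' := hmem (a + 1) (by simp [mem_map_fst_expandEntry_self])
  simp only [List.length_map] at ha ha'
  omega

theorem exists_isPegPattern_pegRd_le (h0 : IsPegPermList πε)
    (hπ : πε = A ++ expandEntry a x y (a, e) ++ B) (he : e ≠ Deco.dot) (hx : x ≠ Deco.minus)
    (hy : y ≠ Deco.minus) :
    ∃ γ, IsPegPermList γ ∧ IsPegPattern γ πε ∧ γ ≠ πε ∧ pegRd πε ≤ pegRd γ := by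
  subst hπ
  obtain ⟨d, hd, hde⟩ := exists_mem_expandEntry_self (y := y) he hx
  have hAB := fst_ne_of_isPegPermList h0
  obtain ⟨ha, han⟩ := one_le_and_lt_length_of_isPegPermList h0
  set s := A ++ (a, d) :: B
  have hsub : s.Sublist (A ++ expandEntry a x y (a, e) ++ B) := by
    simpa [s] using (List.Sublist.refl A).append
      ((List.singleton_sublist.mpr hd).append (List.Sublist.refl B))
  have hlen : s.length + 1 = (A ++ expandEntry a x y (a, e) ++ B).length := by
    have : (expandEntry a x y (a, e)).length = 2 := by rw [expandEntry_self]; split_ifs <;> rfl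
    simp only [List.length_append, List.length_cons, this, s]
    omega
  have hs : ∀ q ∈ s, q.1 ≠ a + 1 ∧ (q.1 = a → q.2 = d) := by
    intro q hq
    simp only [s, List.mem_append, List.mem_cons] at hq
    rcases hq with hq | rfl | hq
    · exact ⟨(hAB q (by simp [hq])).2, fun h => absurd h (hAB q (by simp [hq])).1⟩
    · exact ⟨by simp, fun _ => rfl⟩
    · exact ⟨(hAB q (by simp [hq])).2, fun h => absurd h (hAB q (by simp [hq])).1⟩
  have hsa : ∀ q ∈ s, q.1 ≠ a + 1 := fun q hq => (hs q hq).1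
  have hγ : IsPegPermList (s.map (mergeEntry a e)) :=
    isPegPermList_map_mergeEntry h0 hsub hlen hsa (by omega)
  refine ⟨s.map (mergeEntry a e), hγ,
    isPegPattern_map_mergeEntry hsub hsa fun q hq hqa => (hs q hq).2 hqa ▸ hde,
    fun h => by simp [← h] at hlen, ?_⟩
  calc pegRd (A ++ expandEntry a x y (a, e) ++ B)
      = pegRd ((s.map (mergeEntry a e)).flatMap (expandEntry a x y)) := by
        rw [flatMap_expandEntry_map_mergeEntry hAB]
    _ ≤ pegRd (s.map (mergeEntry a e)) :=
        pegRd_flatMap_expandEntry_le hγ (noDotAt_map_mergeEntry hsa he) hx hy ha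
          (by simp only [List.length_map]; omega)

end Merge

lemma CleanCompact.compactPeg {l : PegPerm} (h : CleanCompact l) : CompactPeg l :=
  fun i hi hstrip => absurd hstrip (h i hi)

lemma eq_take_append_getD_append_drop {l : PegPerm} {i : ℕ} (hi : i + 1 < l.length) :
    l = l.take i ++ [l.getD i pegDefault, l.getD (i + 1) pegDefault] ++ l.drop (i + 2) := by
  rw [List.getD_eq_getElem _ _ (by omega), List.getD_eq_getElem _ _ hi]
  conv_lhs => rw [← List.take_append_drop i l, List.drop_eq_getElem_cons (by omega),
    List.drop_eq_getElem_cons hi]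
  simp

/-- every peg basis permutation of `B̂_k^{rd}` is compact. -/
theorem peg_basis_compact (k : ℕ) (πε : PegPerm) (h0 : IsPegPermList πε)
    (h1 : πε ∉ PegBrd k)
    (h2 : ∀ γ, IsPegPermList γ → IsPegPattern γ πε → γ ≠ πε → γ ∈ PegBrd k) :
    CompactPeg πε := by
  refine CleanCompact.compactPeg fun i hi hstrip => ?_
  obtain ⟨a, x, y, e, he, hx, hy, hpair⟩ := hstrip.exists_expandEntry_eq
  obtain ⟨γ, hγ, hpat, hne, hle⟩ := exists_isPegPattern_pegRd_le h0
    (hpair ▸ eq_take_append_getD_append_drop hi) he hx hy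
  exact h1 ⟨h0, hle.trans (h2 γ hγ hpat hne).2⟩
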